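/- In the instance with two agents and three chores with costs c_1 = (1/2+ε, 1/2−ε, 0) and c_2 = (1/2+ε, 0, 1/2−ε) for small ε > 0, every EFX allocation has social cost at least 1, while the optimal social cost is 1/2+ε; hence the additive gap between the best EFX social cost and the optimum is at least 1/2 − ε, while max_i c_i(M) = 1. -/

import Mathlib

open Finset

def bundle (A : Fin 3 → Fin 2) (i : Fin 2) : Finset (Fin 3) :=
  Finset.univ.filter (fun e => A e = i)

def cost (c : Fin 2 → Fin 3 → ℝ) (i : Fin 2) (S : Finset (Fin 3)) : ℝ :=
  ∑ e ∈ S, c i e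

def EFX (c : Fin 2 → Fin 3 → ℝ) (A : Fin 3 → Fin 2) : Prop :=
  ∀ i j : Fin 2, bundle A i = ∅ ∨
    ∀ e ∈ bundle A i, cost c i ((bundle A i).erase e) ≤ cost c i (bundle A j)

def sc (c : Fin 2 → Fin 3 → ℝ) (A : Fin 3 → Fin 2) : ℝ :=
  ∑ i : Fin 2, cost c i (bundle A i)

/-- The hard instance: costs (1/2+ε, 1/2−ε, 0) and (1/2+ε, 0, 1/2−ε). -/
noncomputable def cmat (ε : ℝ) : Fin 2 → Fin 3 → ℝ :=
  ![![1 / 2 + ε, 1 / 2 - ε, 0], ![1 / 2 + ε, 0, 1 / 2 - ε]]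

lemma cases8 (A : Fin 3 → Fin 2) :
    A = ![0,0,0] ∨ A = ![0,0,1] ∨ A = ![0,1,0] ∨ A = ![0,1,1] ∨
    A = ![1,0,0] ∨ A = ![1,0,1] ∨ A = ![1,1,0] ∨ A = ![1,1,1] := by
  have hA : A = ![A 0, A 1, A 2] := by funext e; fin_cases e <;> rfl
  have h0 : A 0 = 0 ∨ A 0 = 1 := by omega
  have h1 : A 1 = 0 ∨ A 1 = 1 := by omega
  have h2 : A 2 = 0 ∨ A 2 = 1 := by omega
  rcases h0 with h0 | h0 <;> rcases h1 with h1 | h1 <;> rcases h2 with h2 | h2 <;>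
    rw [h0, h1, h2] at hA <;> tauto

theorem stmt19 (ε : ℝ) (hε : 0 < ε) (hε' : ε < 1 / 2) :
    -- every EFX allocation has social cost at least 1
    (∀ A : Fin 3 → Fin 2, EFX (cmat ε) A → 1 ≤ sc (cmat ε) A) ∧
    -- the optimal social cost is 1/2 + ε
    (∃ A : Fin 3 → Fin 2, sc (cmat ε) A = 1 / 2 + ε) ∧
    (∀ A : Fin 3 → Fin 2, 1 / 2 + ε ≤ sc (cmat ε) A) ∧
    -- the additive gap of any EFX allocation is at least 1/2 − ε
    (∀ A : Fin 3 → Fin 2, EFX (cmat ε) A →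
      1 / 2 - ε ≤ sc (cmat ε) A - (1 / 2 + ε)) ∧
    -- while max_i c_i(M) = 1
    (∀ i : Fin 2, ∑ e : Fin 3, cmat ε i e = 1) := by
  have main : ∀ A : Fin 3 → Fin 2, EFX (cmat ε) A → 1 ≤ sc (cmat ε) A := by
    intro A hA
    rcases cases8 A with h|h|h|h|h|h|h|h <;> subst h
    · norm_num [sc, cost, bundle, cmat, Fin.sum_univ_succ, Finset.sum_filter]
    · norm_num [sc, cost, bundle, cmat, Fin.sum_univ_succ, Finset.sum_filter]; linarith
    · exfalso
      rcases hA 0 1 with h | h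
      · exact absurd h (by decide)
      · have := h 2 (by decide)
        rw [show (bundle ![0,1,0] 0).erase 2 = {0} from by decide,
            show bundle ![0,1,0] 1 = {1} from by decide] at this
        simp [cost, cmat] at this
        linarith
    · norm_num [sc, cost, bundle, cmat, Fin.sum_univ_succ, Finset.sum_filter]
    · norm_num [sc, cost, bundle, cmat, Fin.sum_univ_succ, Finset.sum_filter]
    · norm_num [sc, cost, bundle, cmat, Fin.sum_univ_succ, Finset.sum_filter]; linarith
    · exfalso
      rcases hA 1 0 with h | h
      · exact absurd h (by decide)
      · have := h 1 (by decide)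
        rw [show (bundle ![1,1,0] 1).erase 1 = {0} from by decide,
            show bundle ![1,1,0] 0 = {2} from by decide] at this
        simp [cost, cmat] at this
        linarith
    · norm_num [sc, cost, bundle, cmat, Fin.sum_univ_succ, Finset.sum_filter]
  refine ⟨main, ⟨![1,1,0], ?_⟩, ?_, ?_, ?_⟩
  · norm_num [sc, cost, bundle, cmat, Fin.sum_univ_succ, Finset.sum_filter]
  · intro A
    rcases cases8 A with h|h|h|h|h|h|h|h <;> subst h <;>
      norm_num [sc, cost, bundle, cmat, Fin.sum_univ_succ, Finset.sum_filter] <;> linarith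
  · intro A hA
    have := main A hA
    linarith
  · intro i
    fin_cases i <;> norm_num [cmat, Fin.sum_univ_succ]
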